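/- arXiv:1405.4359 — 7 statements merged into one kernel-verified Lean document; each statement's English description precedes it below -/
import Mathlib

section
/- Let G be a group acting by homeomorphisms on a nonempty compact Hausdorff space X, and let ν be a regular Borel probability measure on X. Suppose the Poisson map P_ν is isometric, i.e. sup_{s ∈ G} |P_ν(f)(s)| = ‖f‖_∞ for every f ∈ C(X,ℝ). Then for every x ∈ X, the Dirac measure δ_x lies in the closure of the orbit {s·ν : s ∈ G} in the space of regular Borel probability measures on X with the topology of weak convergence (weak-* topology). -/
/-!
Fix `x ∈ X` and finitely many test functions `f₁, …, fₙ`. The function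
`h = ∑ |fᵢ - fᵢ x|` is nonnegative and vanishes at `x`, so `‖h‖ - h` attains its norm `‖h‖`
at `x`. Since `P_ν` is isometric, some `s ∈ G` makes `∫ (‖h‖ - h) d(s·ν)` as close to `‖h‖` as we
like, i.e. makes `∫ h d(s·ν)` small; as `h` dominates every `|fᵢ - fᵢ x|`, the integrals of all
the `fᵢ` against `s·ν` are then close to `fᵢ x = ∫ fᵢ dδₓ`.
-/

open MeasureTheory Filter Set BoundedContinuousFunction

theorem MeasureTheory.ProbabilityMeasure.mem_closure_range_of_forall_finset
    {X ι : Type*} [TopologicalSpace X] [MeasurableSpace X] [OpensMeasurableSpace X]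
    (φ : ι → ProbabilityMeasure X) (μ : ProbabilityMeasure X)
    (h : ∀ (F : Finset (X →ᵇ ℝ)) (ε : ℝ), 0 < ε → ∃ i, ∀ f ∈ F,
      dist (∫ x, f x ∂(φ i : Measure X)) (∫ x, f x ∂(μ : Measure X)) < ε) :
    μ ∈ closure (range φ) := by
  classical
  choose i hi using fun p : Finset (X →ᵇ ℝ) × ℕ => h p.1 (1 / (p.2 + 1)) (by positivity)
  refine mem_closure_of_tendsto (f := φ ∘ i)
    (b := (atTop : Filter (Finset (X →ᵇ ℝ) × ℕ))) ?_
    (Eventually.of_forall fun p => mem_range_self (i p))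
  refine ProbabilityMeasure.tendsto_iff_forall_integral_tendsto.2 fun f => ?_
  refine Metric.tendsto_atTop.2 fun ε hε => ?_
  obtain ⟨N, hN⟩ := exists_nat_one_div_lt hε
  refine ⟨({f}, N), fun ⟨F, n⟩ ⟨hF, hn⟩ =>
    (hi (F, n) f (hF (Finset.mem_singleton_self f))).trans_le ?_⟩
  calc 1 / ((n : ℝ) + 1) ≤ 1 / (N + 1) := by gcongr
    _ ≤ ε := hN.le

theorem MeasureTheory.abs_integral_sub_le_integral_abs_sub {Y : Type*} [MeasurableSpace Y]
    {μ : Measure Y} [IsProbabilityMeasure μ] {f : Y → ℝ} (hf : Integrable f μ) (c : ℝ) :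
    |∫ y, f y ∂μ - c| ≤ ∫ y, |f y - c| ∂μ := by
  have hsub : ∫ y, (f y - c) ∂μ = ∫ y, f y ∂μ - c := by
    rw [integral_sub hf (integrable_const c), integral_const, probReal_univ, one_smul]
  exact hsub ▸ abs_integral_le_integral_abs

theorem ContinuousMap.exists_nonneg_abs_sub_le {X ι : Type*} [TopologicalSpace X]
    (F : Finset ι) (f : ι → C(X, ℝ)) (x : X) :
    ∃ h : C(X, ℝ), (∀ y, 0 ≤ h y) ∧ h x = 0 ∧ ∀ i ∈ F, ∀ y, |f i y - f i x| ≤ h y := by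
  refine ⟨∑ i ∈ F, |f i - ContinuousMap.const X (f i x)|, fun y => ?_, ?_, fun i hi y => ?_⟩
  · simpa using Finset.sum_nonneg fun i _ => abs_nonneg (f i y - f i x)
  · simp
  · simpa using Finset.single_le_sum (f := fun j => |f j y - f j x|)
      (fun j _ => abs_nonneg _) hi

theorem ContinuousMap.norm_const_norm_sub_eq {X : Type*} [TopologicalSpace X] [CompactSpace X]
    {h : C(X, ℝ)} (h0 : ∀ y, 0 ≤ h y) {x : X} (hx : h x = 0) :
    ‖ContinuousMap.const X ‖h‖ - h‖ = ‖h‖ := by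
  have hle : ∀ y, h y ≤ ‖h‖ := fun y => (le_abs_self _).trans (h.norm_coe_le_norm y)
  refine le_antisymm ((ContinuousMap.norm_le _ (norm_nonneg h)).2 fun y => ?_) ?_
  · simp only [ContinuousMap.sub_apply, ContinuousMap.const_apply, Real.norm_eq_abs]
    rw [abs_of_nonneg (sub_nonneg.2 (hle y))]
    linarith [h0 y]
  · simpa [hx] using (ContinuousMap.const X ‖h‖ - h).norm_coe_le_norm x

section Isometric

variable {G X : Type*} [Monoid G] [TopologicalSpace X] [CompactSpace X] [MeasurableSpace X]
  [OpensMeasurableSpace X] [MulAction G X] [ContinuousConstSMul G X]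

theorem integrable_comp_smul (ν : Measure X) [IsFiniteMeasure ν] {f : X → ℝ} (hf : Continuous f)
    (s : G) : Integrable (fun y => f (s • y)) ν :=
  (hf.comp (continuous_const_smul s)).integrable_of_hasCompactSupport
    (HasCompactSupport.of_compactSpace _)

theorem exists_integral_comp_smul_lt_of_isometric (ν : Measure X) [IsProbabilityMeasure ν]
    (hiso : ∀ f : C(X, ℝ), (⨆ s : G, |∫ x, f (s • x) ∂ν|) = ‖f‖)
    {h : C(X, ℝ)} (h0 : ∀ y, 0 ≤ h y) {x : X} (hx : h x = 0) {ε : ℝ} (hε : 0 < ε) :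
    ∃ s : G, ∫ y, h (s • y) ∂ν < ε := by
  set g := ContinuousMap.const X ‖h‖ - h
  have hsup : ‖h‖ - ε < ⨆ s : G, |∫ y, g (s • y) ∂ν| := by
    rw [hiso g, ContinuousMap.norm_const_norm_sub_eq h0 hx]
    linarith
  obtain ⟨s, hs⟩ := exists_lt_of_lt_ciSup hsup
  have hg : ∫ y, g (s • y) ∂ν = ‖h‖ - ∫ y, h (s • y) ∂ν := by
    simp only [g, ContinuousMap.sub_apply, ContinuousMap.const_apply]
    rw [integral_sub (integrable_const _) (integrable_comp_smul ν h.continuous s),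
      integral_const, probReal_univ, one_smul]
  have hg_nonneg : 0 ≤ ∫ y, g (s • y) ∂ν := integral_nonneg fun y =>
    sub_nonneg.2 ((le_abs_self _).trans (h.norm_coe_le_norm _))
  rw [abs_of_nonneg hg_nonneg, hg] at hs
  exact ⟨s, by linarith⟩

theorem exists_forall_abs_integral_comp_smul_sub_lt_of_isometric (ν : Measure X)
    [IsProbabilityMeasure ν] (hiso : ∀ f : C(X, ℝ), (⨆ s : G, |∫ x, f (s • x) ∂ν|) = ‖f‖)
    (x : X) (F : Finset (X →ᵇ ℝ)) {ε : ℝ} (hε : 0 < ε) :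
    ∃ s : G, ∀ f ∈ F, |∫ y, f (s • y) ∂ν - f x| < ε := by
  obtain ⟨h, h0, hx, hdom⟩ := ContinuousMap.exists_nonneg_abs_sub_le F (fun f => (f : C(X, ℝ))) x
  obtain ⟨s, hs⟩ := exists_integral_comp_smul_lt_of_isometric ν hiso h0 hx hε
  refine ⟨s, fun f hf => ?_⟩
  calc |∫ y, f (s • y) ∂ν - f x| ≤ ∫ y, |f (s • y) - f x| ∂ν :=
        abs_integral_sub_le_integral_abs_sub (integrable_comp_smul ν f.continuous s) _
    _ ≤ ∫ y, h (s • y) ∂ν :=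
        integral_mono (integrable_comp_smul ν (f.continuous.sub continuous_const).abs s)
          (integrable_comp_smul ν h.continuous s) fun y => hdom f hf _
    _ < ε := hs

end Isometric

theorem stmt_0_general {G X : Type*} [Group G] [TopologicalSpace X] [CompactSpace X]
    [MeasurableSpace X] [BorelSpace X]
    [MulAction G X] [ContinuousConstSMul G X]
    (ν : ProbabilityMeasure X)
    (hiso : ∀ f : C(X, ℝ), (⨆ s : G, |∫ x, f (s • x) ∂(ν : Measure X)|) = ‖f‖) :
    ∀ x : X, (⟨Measure.dirac x, inferInstance⟩ : ProbabilityMeasure X) ∈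
      closure {μ : ProbabilityMeasure X | ∃ s : G,
        μ = ν.map ((continuous_const_smul s).measurable.aemeasurable :
          AEMeasurable (fun y : X => s • y) (ν : Measure X))} := by
  intro x
  set φ := fun s : G => ν.map ((continuous_const_smul s).measurable.aemeasurable :
    AEMeasurable (fun y : X => s • y) (ν : Measure X))
  refine closure_mono (s := range φ) (by rintro _ ⟨s, rfl⟩; exact ⟨s, rfl⟩) <|
    ProbabilityMeasure.mem_closure_range_of_forall_finset φ _ fun F ε hε => ?_
  obtain ⟨s, hs⟩ :=
    exists_forall_abs_integral_comp_smul_sub_lt_of_isometric (ν : Measure X) hiso x F hε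
  refine ⟨s, fun f hf => ?_⟩
  rw [ProbabilityMeasure.toMeasure_map, integral_map (continuous_const_smul s).aemeasurable
    f.continuous.aestronglyMeasurable, ProbabilityMeasure.coe_mk,
    integral_dirac' _ _ f.continuous.stronglyMeasurable]
  exact hs f hf

/-- If the Poisson map `P_ν : C(X,ℝ) → ℓ∞(G)` is isometric, then every Dirac measure `δ_x`
lies in the weak-* closure of the `G`-orbit of `ν`. -/
theorem stmt_0 {G X : Type*} [Group G] [TopologicalSpace X] [CompactSpace X] [T2Space X]
    [Nonempty X] [MeasurableSpace X] [BorelSpace X]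
    [MulAction G X] [ContinuousConstSMul G X]
    (ν : ProbabilityMeasure X) (hreg : (ν : Measure X).Regular)
    (hiso : ∀ f : C(X, ℝ), (⨆ s : G, |∫ x, f (s • x) ∂(ν : Measure X)|) = ‖f‖) :
    ∀ x : X, (⟨Measure.dirac x, inferInstance⟩ : ProbabilityMeasure X) ∈
      closure {μ : ProbabilityMeasure X | ∃ s : G,
        μ = ν.map ((continuous_const_smul s).measurable.aemeasurable :
          AEMeasurable (fun y : X => s • y) (ν : Measure X))} :=
  stmt_0_general ν hiso
end

section
/- Let G be a group acting by homeomorphisms on a nonempty compact Hausdorff space X, and let ν be a regular Borel probability measure on X. Suppose the Poisson map P_ν is isometric, i.e. sup_{s ∈ G} |P_ν(f)(s)| = ‖f‖_∞ for every f ∈ C(X,ℝ). Then every regular Borel probability measure μ on X lies in the weak-* closure of the convex hull of the orbit {s·ν : s ∈ G}; that is, the weak-* closed convex hull of {s·ν : s ∈ G} is the entire set of regular Borel probability measures on X. -/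
open MeasureTheory
open scoped ENNReal

/-!
Isometry of the Poisson map, applied to the nonnegative function `f + ‖f‖`, gives
`∫ f dμ ≤ sup_s ∫ f (s • x) dν` for every probability measure `μ`. Weak convergence is tested on
finitely many functions `f_i` at a time, so it suffices to approximate the vector `(∫ f_i dμ)_i`
by convex combinations of the orbit vectors `(∫ f_i (s • x) dν)_i`. Otherwise Hahn–Banach in
`ℝ^n` separates them by a functional which is integration against some `F = ∑ a_i f_i`,
contradicting the inequality for `F`.
-/

open Set Topology
open scoped NNReal BoundedContinuousFunction

lemma mem_closure_convexHull_of_forall_le {E : Type*} [AddCommGroup E] [Module ℝ E]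
    [TopologicalSpace E] [IsTopologicalAddGroup E] [ContinuousSMul ℝ E] [LocallyConvexSpace ℝ E]
    {s : Set E} {v : E} (h : ∀ (ℓ : StrongDual ℝ E) (u : ℝ), (∀ z ∈ s, ℓ z ≤ u) → ℓ v ≤ u) :
    v ∈ closure (convexHull ℝ s) := by
  by_contra hv
  obtain ⟨ℓ, u, hu, hvu⟩ :=
    geometric_hahn_banach_closed_point (convex_convexHull ℝ s).closure isClosed_closure hv
  exact hvu.not_ge <| h ℓ u fun z hz => (hu z <| subset_closure <| subset_convexHull ℝ s hz).le

namespace MeasureTheory.ProbabilityMeasure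

variable {Ω : Type*} [TopologicalSpace Ω] [MeasurableSpace Ω] [OpensMeasurableSpace Ω]

lemma isInducing_integral :
    IsInducing fun (P : ProbabilityMeasure Ω) (f : Ω →ᵇ ℝ≥0) =>
      ∫ x, (f x : ℝ) ∂(P : Measure Ω) := by
  have hNN : IsInducing fun (P : ProbabilityMeasure Ω) (f : Ω →ᵇ ℝ≥0) =>
      P.toFiniteMeasure.testAgainstNN f :=
    ((⟨rfl⟩ : IsInducing fun (φ : WeakDual ℝ≥0 (Ω →ᵇ ℝ≥0)) f => φ f).comp ⟨rfl⟩).comp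
      (toFiniteMeasure_isEmbedding Ω).isInducing
  convert (IsInducing.piMap fun _ => NNReal.isEmbedding_coe.isInducing).comp hNN using 1
  ext P f
  exact (f.toReal_lintegral_coe_eq_integral _).symm

lemma mem_closure_of_forall_finset {μ : ProbabilityMeasure Ω} {S : Set (ProbabilityMeasure Ω)}
    (h : ∀ T : Finset (Ω →ᵇ ℝ≥0), (fun f : T => ∫ x, (f.1 x : ℝ) ∂(μ : Measure Ω)) ∈
      closure ((fun (η : ProbabilityMeasure Ω) (f : T) => ∫ x, (f.1 x : ℝ) ∂(η : Measure Ω)) ''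
        S)) :
    μ ∈ closure S := by
  rw [isInducing_integral.closure_eq_preimage_closure_image, mem_preimage, mem_closure_iff_nhds]
  intro U hU
  rw [nhds_pi, Filter.mem_pi'] at hU
  obtain ⟨T, t, ht, hsub⟩ := hU
  obtain ⟨_, hp, η, hη, rfl⟩ := mem_closure_iff_nhds.1 (h T) _
    (set_pi_mem_nhds finite_univ fun f _ => ht f)
  exact ⟨_, hsub fun f hf => hp ⟨f, hf⟩ trivial, η, hη, rfl⟩

end MeasureTheory.ProbabilityMeasure

lemma MeasureTheory.isProbabilityMeasure_sum_smul {Ω κ : Type*} [MeasurableSpace Ω] [Fintype κ]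
    (μ : κ → Measure Ω) [∀ k, IsProbabilityMeasure (μ k)] {w : κ → ℝ≥0∞} (hw : ∑ k, w k = 1) :
    IsProbabilityMeasure (∑ k, w k • μ k) :=
  ⟨by simp [Measure.finsetSum_apply, hw]⟩

section CompactSpace

variable {X : Type*} [TopologicalSpace X] [CompactSpace X]

lemma ContinuousMap.abs_integral_comp_le_norm {Y : Type*} [MeasurableSpace Y] (f : C(X, ℝ))
    (φ : Y → X) (μ : Measure Y) [IsProbabilityMeasure μ] : |∫ y, f (φ y) ∂μ| ≤ ‖f‖ := by
  simpa using
    norm_integral_le_of_norm_le_const (μ := μ) (.of_forall fun y => f.norm_coe_le_norm (φ y))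

variable [MeasurableSpace X] [OpensMeasurableSpace X]

lemma ContinuousMap.integrable (f : C(X, ℝ)) (μ : Measure X) [IsFiniteMeasure μ] :
    Integrable f μ :=
  (BoundedContinuousFunction.mkOfCompact f).integrable μ

lemma ContinuousMap.integral_add_const (f : C(X, ℝ)) (c : ℝ) (μ : Measure X)
    [IsProbabilityMeasure μ] : ∫ x, f x + c ∂μ = ∫ x, f x ∂μ + c := by
  rw [integral_add (f.integrable μ) (integrable_const c), integral_const, probReal_univ, one_smul]

lemma StrongDual.exists_apply_integral_comp_eq {ι : Type*} [Fintype ι] (ℓ : StrongDual ℝ (ι → ℝ))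
    (f : ι → C(X, ℝ)) : ∃ F : C(X, ℝ), ∀ (μ : Measure X) [IsFiniteMeasure μ] (φ : C(X, X)),
      ℓ (fun i => ∫ x, f i (φ x) ∂μ) = ∫ x, F (φ x) ∂μ := by
  classical
  refine ⟨∑ i, ℓ (Pi.single i 1) • f i, fun μ _ φ => ?_⟩
  have hint (i : ι) : Integrable (fun x => f i (φ x)) μ := ((f i).comp φ).integrable μ
  simp only [ContinuousMap.sum_apply, ContinuousMap.smul_apply, smul_eq_mul]
  rw [integral_finsetSum _ fun i _ => (hint i).const_mul _,
    pi_eq_sum_univ' (fun i => ∫ x, f i (φ x) ∂μ), map_sum]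
  simp only [integral_const_mul, map_smul, smul_eq_mul]
  exact Finset.sum_congr rfl fun i _ => mul_comm _ _

variable {G : Type*} [Group G] [MulAction G X] [ContinuousConstSMul G X]

lemma integral_le_iSup_integral_smul_of_isometry (ν : Measure X) [IsProbabilityMeasure ν]
    (hiso : ∀ f : C(X, ℝ), (⨆ s : G, |∫ x, f (s • x) ∂ν|) = ‖f‖)
    (μ : Measure X) [IsProbabilityMeasure μ] (f : C(X, ℝ)) :
    ∫ x, f x ∂μ ≤ ⨆ s : G, ∫ x, f (s • x) ∂ν := by
  have hle (s : G) : |∫ x, f (s • x) ∂ν| ≤ ‖f‖ := f.abs_integral_comp_le_norm _ ν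
  have hbdd : BddAbove (range fun s : G => ∫ x, f (s • x) ∂ν) :=
    ⟨‖f‖, forall_mem_range.2 fun s => (le_abs_self _).trans (hle s)⟩
  let g : C(X, ℝ) := f + .const X ‖f‖
  have hg (s : G) : |∫ x, g (s • x) ∂ν| = ∫ x, f (s • x) ∂ν + ‖f‖ := by
    rw [show ∫ x, g (s • x) ∂ν = ∫ x, f (s • x) ∂ν + ‖f‖ from
      (f.comp ⟨(s • ·), continuous_const_smul s⟩).integral_add_const ‖f‖ ν]
    exact abs_of_nonneg (by linarith [(abs_le.1 (hle s)).1])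
  calc ∫ x, f x ∂μ = ∫ x, g x ∂μ - ‖f‖ := by
        rw [show ∫ x, g x ∂μ = _ from f.integral_add_const ‖f‖ μ]; ring
    _ ≤ ‖g‖ - ‖f‖ := by gcongr; exact (le_abs_self _).trans (g.abs_integral_comp_le_norm id μ)
    _ = ⨆ s : G, ∫ x, f (s • x) ∂ν := by
        rw [← hiso g]; simp only [hg]; rw [← ciSup_add hbdd]; ring

lemma integral_mem_closure_convexHull_of_isometry (ν : Measure X) [IsProbabilityMeasure ν]
    (hiso : ∀ f : C(X, ℝ), (⨆ s : G, |∫ x, f (s • x) ∂ν|) = ‖f‖)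
    (μ : Measure X) [IsProbabilityMeasure μ] {ι : Type*} [Fintype ι] (f : ι → C(X, ℝ)) :
    (fun i => ∫ x, f i x ∂μ) ∈
      closure (convexHull ℝ (range fun s : G => fun i => ∫ x, f i (s • x) ∂ν)) := by
  refine mem_closure_convexHull_of_forall_le fun ℓ u hu => ?_
  obtain ⟨F, hF⟩ := ℓ.exists_apply_integral_comp_eq f
  calc ℓ (fun i => ∫ x, f i x ∂μ) = ∫ x, F x ∂μ := hF μ (.id X)
    _ ≤ ⨆ s : G, ∫ x, F (s • x) ∂ν := integral_le_iSup_integral_smul_of_isometry ν hiso μ F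
    _ ≤ u := ciSup_le fun s => hF ν ⟨(s • ·), continuous_const_smul s⟩ ▸ hu _ ⟨s, rfl⟩

variable [BorelSpace X]

lemma ContinuousMap.integral_sum_smul_map_smul (f : C(X, ℝ)) (ν : Measure X) [IsFiniteMeasure ν]
    {κ : Type*} [Fintype κ] {w : κ → ℝ≥0∞} (hw : ∀ k, w k ≠ ∞) (g : κ → G) :
    ∫ x, f x ∂(∑ k, w k • ν.map (g k • ·)) = ∑ k, (w k).toReal * ∫ x, f (g k • x) ∂ν := by
  have (k : κ) : IsFiniteMeasure (w k • ν.map (g k • ·)) := (ν.map _).smul_finite (hw k)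
  rw [integral_finsetSum_measure fun k _ => f.integrable _]
  refine Finset.sum_congr rfl fun k _ => ?_
  rw [integral_smul_measure, integral_map (continuous_const_smul (g k)).aemeasurable
    f.continuous.aestronglyMeasurable, smul_eq_mul]

lemma convexHull_integral_smul_subset_image (ν : ProbabilityMeasure X) {ι : Type*}
    (f : ι → C(X, ℝ)) :
    convexHull ℝ (range fun s : G => fun i => ∫ x, f i (s • x) ∂(ν : Measure X)) ⊆
      (fun (η : ProbabilityMeasure X) i => ∫ x, f i x ∂(η : Measure X)) ''
        {η : ProbabilityMeasure X | ∃ (n : ℕ) (w : Fin n → ℝ≥0∞) (g : Fin n → G),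
          (∑ i, w i = 1) ∧
          (η : Measure X) = ∑ i, w i • (ν : Measure X).map (fun y : X => g i • y)} := by
  intro p hp
  obtain ⟨κ, _, w, z, hw0, hw1, hz, rfl⟩ := mem_convexHull_iff_exists_fintype.1 hp
  let e := (Fintype.equivFin κ).symm
  rw [← e.sum_comp] at hw1 ⊢
  choose g hg using fun k => hz (e k)
  let w' k := ENNReal.ofReal (w (e k))
  have hw' : ∑ k, w' k = 1 := by
    rw [← ENNReal.ofReal_sum_of_nonneg fun k _ => hw0 (e k), hw1, ENNReal.ofReal_one]
  have (k : Fin _) : IsProbabilityMeasure ((ν : Measure X).map (g k • ·)) :=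
    Measure.isProbabilityMeasure_map (continuous_const_smul (g k)).aemeasurable
  refine ⟨⟨_, isProbabilityMeasure_sum_smul _ hw'⟩, ⟨_, w', g, hw', rfl⟩, funext fun i => ?_⟩
  show ∫ x, f i x ∂(∑ k, w' k • (ν : Measure X).map (g k • ·)) = _
  rw [(f i).integral_sum_smul_map_smul _ (fun _ => ENNReal.ofReal_ne_top)]
  simp [ENNReal.toReal_ofReal (hw0 _), ← hg]

end CompactSpace

theorem stmt_1_general {G X : Type*} [Group G] [TopologicalSpace X] [CompactSpace X]
    [MeasurableSpace X] [BorelSpace X]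
    [MulAction G X] [ContinuousConstSMul G X]
    (ν : ProbabilityMeasure X)
    (hiso : ∀ f : C(X, ℝ), (⨆ s : G, |∫ x, f (s • x) ∂(ν : Measure X)|) = ‖f‖) :
    ∀ μ : ProbabilityMeasure X, (μ : Measure X).Regular →
      μ ∈ closure {η : ProbabilityMeasure X | ∃ (n : ℕ) (w : Fin n → ℝ≥0∞) (g : Fin n → G),
        (∑ i, w i = 1) ∧
        (η : Measure X) = ∑ i, w i • (ν : Measure X).map (fun y : X => g i • y)} := by
  intro μ _
  refine ProbabilityMeasure.mem_closure_of_forall_finset fun T => ?_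
  let f (i : T) : C(X, ℝ) := ⟨fun x => (i.1 x : ℝ), by fun_prop⟩
  exact closure_mono (convexHull_integral_smul_subset_image ν f)
    (integral_mem_closure_convexHull_of_isometry (ν : Measure X) hiso μ f)

/-- If the Poisson map `P_ν : C(X,ℝ) → ℓ∞(G)` is isometric, then the weak-* closed convex
hull of the `G`-orbit of `ν` is the whole space of regular Borel probability measures. -/
theorem stmt_1 {G X : Type*} [Group G] [TopologicalSpace X] [CompactSpace X] [T2Space X]
    [Nonempty X] [MeasurableSpace X] [BorelSpace X]
    [MulAction G X] [ContinuousConstSMul G X]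
    (ν : ProbabilityMeasure X) (hreg : (ν : Measure X).Regular)
    (hiso : ∀ f : C(X, ℝ), (⨆ s : G, |∫ x, f (s • x) ∂(ν : Measure X)|) = ‖f‖) :
    ∀ μ : ProbabilityMeasure X, (μ : Measure X).Regular →
      μ ∈ closure {η : ProbabilityMeasure X | ∃ (n : ℕ) (w : Fin n → ℝ≥0∞) (g : Fin n → G),
        (∑ i, w i = 1) ∧
        (η : Measure X) = ∑ i, w i • (ν : Measure X).map (fun y : X => g i • y)} :=
  stmt_1_general ν hiso
end

section
/- Let G be a countable discrete group acting by homeomorphisms on a compact Hausdorff space X. If the G-action on X is amenable, then the induced G-action on the space P(X) of regular Borel probability measures on X, equipped with the topology of weak convergence (on which G acts by pushforward of measures), is also amenable. -/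
open MeasureTheory BoundedContinuousFunction

/-- The action map `act : G → Y → Y` on a topological space `Y` is (topologically) amenable:
for every finite `F ⊆ G` and `ε > 0` there is a continuous map `m` from `Y` to the space of
probability densities on `G` (with the topology of pointwise convergence) which is
`(F, ε)`-approximately equivariant. -/
def AmenableAction {G Y : Type*} [Group G] [TopologicalSpace Y] (act : G → Y → Y) : Prop :=
  ∀ (F : Finset G) (ε : ℝ), 0 < ε →
    ∃ m : C(Y, {p : G → ℝ // (∀ t, 0 ≤ p t) ∧ HasSum p 1}),
      ∀ s ∈ F, ∀ y : Y, (∑' t : G, |(m y).1 (s⁻¹ * t) - (m (act s y)).1 t|) < ε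

/-- If the action of a countable discrete group `G` on a compact Hausdorff space `X` is
amenable, then so is the induced action on the space of regular Borel probability measures
on `X` (with the topology of weak convergence, `G` acting by pushforward). -/
theorem stmt_2 {G X : Type*} [Group G] [Countable G]
    [TopologicalSpace X] [CompactSpace X] [T2Space X]
    [MeasurableSpace X] [BorelSpace X]
    [MulAction G X] [ContinuousConstSMul G X]
    (hamen : AmenableAction (fun (s : G) (x : X) => s • x)) :
    AmenableAction (fun (s : G) (ν : ProbabilityMeasure X) =>
      ν.map ((continuous_const_smul s).measurable.aemeasurable :
        AEMeasurable (fun y : X => s • y) (ν : Measure X))) := by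
  intro F ε hε
  obtain ⟨m, hm⟩ := hamen F (ε / 2) (half_pos hε)
  -- bounded continuous coordinate functions
  set f : G → (X →ᵇ ℝ) := fun t =>
    BoundedContinuousFunction.mkOfCompact
      ⟨fun x => (m x).1 t,
        (continuous_apply t).comp (continuous_subtype_val.comp m.continuous)⟩ with hfdef
  have hfx : ∀ t (x : X), f t x = (m x).1 t := fun t x => rfl
  have hf0 : ∀ t (x : X), 0 ≤ f t x := fun t x => (m x).2.1 t
  have hfsum : ∀ x : X, HasSum (fun t => f t x) 1 := fun x => (m x).2.2
  have hint : ∀ (t : G) (ν : ProbabilityMeasure X), Integrable (f t) (ν : Measure X) :=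
    fun t ν => (f t).integrable _
  set M : ProbabilityMeasure X → G → ℝ := fun ν t => ∫ x, f t x ∂(ν : Measure X) with hMdef
  have hM0 : ∀ ν t, 0 ≤ M ν t := fun ν t => integral_nonneg fun x => hf0 t x
  have hMsummable : ∀ ν, Summable (M ν) := by
    intro ν
    apply summable_of_sum_le (c := 1) (fun t => hM0 ν t)
    intro u
    calc ∑ t ∈ u, M ν t = ∫ x, ∑ t ∈ u, f t x ∂(ν : Measure X) :=
          (integral_finset_sum u fun t _ => hint t ν).symm
      _ ≤ ∫ _x, (1 : ℝ) ∂(ν : Measure X) := by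
          apply integral_mono (integrable_finset_sum u fun t _ => hint t ν)
            (integrable_const 1)
          intro x
          exact sum_le_hasSum u (fun t _ => hf0 t x) (hfsum x)
      _ = 1 := by simp
  have hMhasSum : ∀ ν, HasSum (M ν) 1 := by
    intro ν
    have hnorm : Summable fun t => ∫ x, ‖f t x‖ ∂(ν : Measure X) := by
      apply (hMsummable ν).congr
      intro t
      apply integral_congr_ae
      filter_upwards with x
      exact (Real.norm_of_nonneg (hf0 t x)).symm
    have h1 := hasSum_integral_of_summable_integral_norm (μ := (ν : Measure X))
      (F := fun t x => f t x) (fun t => hint t ν) hnorm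
    have h2 : (∫ x, (∑' t, f t x) ∂(ν : Measure X)) = 1 := by
      have : ∀ x : X, (∑' t, f t x) = 1 := fun x => (hfsum x).tsum_eq
      simp [this]
    rwa [h2] at h1
  refine ⟨⟨fun ν => ⟨M ν, hM0 ν, hMhasSum ν⟩, ?_⟩, ?_⟩
  · apply Continuous.subtype_mk
    apply continuous_pi
    intro t
    exact ProbabilityMeasure.continuous_integral_boundedContinuousFunction (f t)
  · intro s hs ν
    -- the pushforward measure
    have hmeas : AEMeasurable (fun y : X => s • y) (ν : Measure X) :=
      (continuous_const_smul s).measurable.aemeasurable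
    have hmap : ((ν.map hmeas : ProbabilityMeasure X) : Measure X)
        = (ν : Measure X).map (fun y : X => s • y) :=
      ProbabilityMeasure.toMeasure_map ν hmeas
    have key : ∀ t : G, M (ν.map hmeas) t = ∫ x, f t (s • x) ∂(ν : Measure X) := by
      intro t
      show (∫ x, f t x ∂((ν.map hmeas : ProbabilityMeasure X) : Measure X)) = _
      rw [hmap]
      exact integral_map hmeas (f t).continuous.aestronglyMeasurable
    -- f t ∘ (s • ·) as a bounded continuous function
    set g : G → (X →ᵇ ℝ) := fun t =>
      (f t).compContinuous ⟨fun x : X => s • x, continuous_const_smul s⟩ with hgdef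
    have hgx : ∀ t (x : X), g t x = f t (s • x) := fun t x => rfl
    have hgint : ∀ t : G, Integrable (fun x => f t (s • x)) (ν : Measure X) :=
      fun t => (g t).integrable _
    -- pointwise summability of the differences
    have hsummabs : ∀ x : X, Summable fun t => |f (s⁻¹ * t) x - f t (s • x)| := by
      intro x
      have h1 : Summable fun t => f (s⁻¹ * t) x :=
        (Equiv.mulLeft s⁻¹).summable_iff.mpr (hfsum x).summable
      have h2 : Summable fun t => f t (s • x) := (hfsum (s • x)).summable
      apply Summable.of_nonneg_of_le (fun t => abs_nonneg _) _ (h1.add h2)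
      intro t
      calc |f (s⁻¹ * t) x - f t (s • x)| ≤ |f (s⁻¹ * t) x| + |f t (s • x)| := by
            have := norm_sub_le (f (s⁻¹ * t) x) (f t (s • x))
            simpa [Real.norm_eq_abs] using this
        _ = f (s⁻¹ * t) x + f t (s • x) := by
            rw [abs_of_nonneg (hf0 _ x), abs_of_nonneg (hf0 _ _)]
    have hptwise : ∀ x : X, (∑' t, |f (s⁻¹ * t) x - f t (s • x)|) ≤ ε / 2 := by
      intro x
      have := hm s hs x
      simp only [hfx] at this ⊢
      exact this.le
    -- the tsum estimate
    have habs : (∑' t, |M ν (s⁻¹ * t) - M (ν.map hmeas) t|) ≤ ε / 2 := by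
      apply tsum_le_of_sum_le'
      · exact (half_pos hε).le
      intro u
      have step1 : ∀ t : G, |M ν (s⁻¹ * t) - M (ν.map hmeas) t|
          ≤ ∫ x, |f (s⁻¹ * t) x - f t (s • x)| ∂(ν : Measure X) := by
        intro t
        rw [key t]
        have : M ν (s⁻¹ * t) - (∫ x, f t (s • x) ∂(ν : Measure X))
            = ∫ x, (f (s⁻¹ * t) x - f t (s • x)) ∂(ν : Measure X) :=
          (integral_sub (hint _ ν) (hgint t)).symm
        rw [this]
        simpa [Real.norm_eq_abs] using
          norm_integral_le_integral_norm (μ := (ν : Measure X))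
            (f := fun x => f (s⁻¹ * t) x - f t (s • x))
      calc ∑ t ∈ u, |M ν (s⁻¹ * t) - M (ν.map hmeas) t|
          ≤ ∑ t ∈ u, ∫ x, |f (s⁻¹ * t) x - f t (s • x)| ∂(ν : Measure X) :=
            Finset.sum_le_sum fun t _ => step1 t
        _ = ∫ x, ∑ t ∈ u, |f (s⁻¹ * t) x - f t (s • x)| ∂(ν : Measure X) :=
            (integral_finset_sum u fun t _ => ((hint _ ν).sub (hgint t)).abs).symm
        _ ≤ ∫ _x, (ε / 2) ∂(ν : Measure X) := by
            apply integral_mono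
              (integrable_finset_sum u fun t _ => ((hint _ ν).sub (hgint t)).abs)
              (integrable_const _)
            intro x
            exact le_trans
              (Summable.sum_le_tsum u (fun t _ => abs_nonneg _) (hsummabs x)) (hptwise x)
        _ = ε / 2 := by simp
    calc (∑' t, |M ν (s⁻¹ * t) - M (ν.map hmeas) t|) ≤ ε / 2 := habs
      _ < ε := half_lt_self hε
end

section
/- Let G be a group that is not amenable, acting by homeomorphisms on a nonempty compact Hausdorff space X such that the action is minimal (every orbit is dense). Suppose there exists a unital positive G-equivariant linear map ψ : ℓ∞(G) → C(X,ℝ). Then X has no isolated points. -/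
/-!
One isolated point makes every point isolated, since the translates of an open singleton by a
minimal action are again open singletons and reach every point. Compact and discrete, `X` is then
finite, and averaging `ψ h` over the finitely many points of `X` is a left-invariant mean on `ℓ∞(G)`,
since `G` merely permutes these points.
-/

/-- `H` admits a left-invariant mean on `ℓ∞(H)` (the bounded real functions on the discrete
group `H`), i.e. `H` is amenable. -/
def HasLeftInvariantMean (H : Type*) [Group H] [TopologicalSpace H] [DiscreteTopology H] :
    Prop :=
  ∃ m : BoundedContinuousFunction H ℝ →ₗ[ℝ] ℝ,
    m 1 = 1 ∧ (∀ f : BoundedContinuousFunction H ℝ, (∀ t, 0 ≤ f t) → 0 ≤ m f) ∧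
    ∀ (r : H) (f : BoundedContinuousFunction H ℝ),
      m (f.compContinuous ⟨fun t => r⁻¹ * t, continuous_of_discreteTopology⟩) = m f

open MulAction

theorem discreteTopology_of_isOpen_singleton_of_isMinimal (G : Type*) {X : Type*} [Group G]
    [TopologicalSpace X] [MulAction G X] [ContinuousConstSMul G X] [IsMinimal G X]
    {x : X} (hx : IsOpen ({x} : Set X)) : DiscreteTopology X := by
  refine discreteTopology_iff_isOpen_singleton.mpr fun y => ?_
  obtain ⟨s, hs⟩ := hx.exists_smul_mem G y (Set.singleton_nonempty x)
  have hpre : (fun z : X => s • z) ⁻¹' {x} = {y} := by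
    rw [← Set.mem_singleton_iff.mp hs]
    ext z
    simp
  exact hpre ▸ hx.preimage (continuous_const_smul s)

theorem hasLeftInvariantMean_of_equivariant_of_finite {G X : Type*} [Group G]
    [TopologicalSpace G] [DiscreteTopology G] [TopologicalSpace X] [Fintype X] [Nonempty X]
    [MulAction G X] (ψ : BoundedContinuousFunction G ℝ →ₗ[ℝ] C(X, ℝ)) (hψ1 : ψ 1 = 1)
    (hψpos : ∀ h : BoundedContinuousFunction G ℝ, (∀ t, 0 ≤ h t) → ∀ x : X, 0 ≤ ψ h x)
    (hψeq : ∀ (s : G) (h : BoundedContinuousFunction G ℝ) (x : X),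
      ψ (h.compContinuous ⟨fun t => s⁻¹ * t, continuous_of_discreteTopology⟩) x
        = ψ h (s⁻¹ • x)) :
    HasLeftInvariantMean G := by
  have hcard : (0 : ℝ) < Fintype.card X := by exact_mod_cast Fintype.card_pos
  let m : BoundedContinuousFunction G ℝ →ₗ[ℝ] ℝ :=
    (Fintype.card X : ℝ)⁻¹ • ∑ y : X, (ContinuousMap.evalCLM ℝ y).toLinearMap ∘ₗ ψ
  have hm : ∀ h, m h = (Fintype.card X : ℝ)⁻¹ * ∑ y : X, ψ h y := fun h => by
    simp [m, LinearMap.sum_apply]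
  refine ⟨m, ?_, fun f hf => ?_, fun r f => ?_⟩
  · rw [hm, hψ1]
    simp [hcard.ne']
  · rw [hm]
    exact mul_nonneg (inv_nonneg.mpr hcard.le) (Finset.sum_nonneg fun y _ => hψpos f hf y)
  · simp only [hm, hψeq]
    congr 1
    exact Fintype.sum_equiv (MulAction.toPerm r⁻¹) _ _ fun y => rfl

theorem stmt_7_general {G X : Type*} [Group G] [TopologicalSpace G] [DiscreteTopology G]
    [TopologicalSpace X] [CompactSpace X]
    [MulAction G X] [ContinuousConstSMul G X]
    (hG : ¬ HasLeftInvariantMean G)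
    (hmin : ∀ y : X, Dense (Set.range fun s : G => s • y))
    (ψ : BoundedContinuousFunction G ℝ →ₗ[ℝ] C(X, ℝ))
    (hψ1 : ψ 1 = 1)
    (hψpos : ∀ h : BoundedContinuousFunction G ℝ, (∀ t, 0 ≤ h t) → ∀ x : X, 0 ≤ ψ h x)
    (hψeq : ∀ (s : G) (h : BoundedContinuousFunction G ℝ) (x : X),
      ψ (h.compContinuous ⟨fun t => s⁻¹ * t, continuous_of_discreteTopology⟩) x
        = ψ h (s⁻¹ • x)) :
    ∀ x : X, ¬ IsOpen ({x} : Set X) := by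
  intro x hx
  have : IsMinimal G X := ⟨hmin⟩
  have : DiscreteTopology X := discreteTopology_of_isOpen_singleton_of_isMinimal G hx
  have : Fintype X := @Fintype.ofFinite X finite_of_compact_of_discrete
  have : Nonempty X := ⟨x⟩
  exact hG (hasLeftInvariantMean_of_equivariant_of_finite ψ hψ1 hψpos hψeq)

/-- If a non-amenable group `G` acts minimally on a nonempty compact Hausdorff space `X`
and there is a unital positive `G`-equivariant linear map `ψ : ℓ∞(G) → C(X,ℝ)`, then `X`
has no isolated points. -/
theorem stmt_7 {G X : Type*} [Group G] [TopologicalSpace G] [DiscreteTopology G]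
    [TopologicalSpace X] [CompactSpace X] [T2Space X] [Nonempty X]
    [MulAction G X] [ContinuousConstSMul G X]
    (hG : ¬ HasLeftInvariantMean G)
    (hmin : ∀ y : X, Dense (Set.range fun s : G => s • y))
    (ψ : BoundedContinuousFunction G ℝ →ₗ[ℝ] C(X, ℝ))
    (hψ1 : ψ 1 = 1)
    (hψpos : ∀ h : BoundedContinuousFunction G ℝ, (∀ t, 0 ≤ h t) → ∀ x : X, 0 ≤ ψ h x)
    (hψeq : ∀ (s : G) (h : BoundedContinuousFunction G ℝ) (x : X),
      ψ (h.compContinuous ⟨fun t => s⁻¹ * t, continuous_of_discreteTopology⟩) x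
        = ψ h (s⁻¹ • x)) :
    ∀ x : X, ¬ IsOpen ({x} : Set X) :=
  stmt_7_general hG hmin ψ hψ1 hψpos hψeq
end

section
/- Let G be a group acting by homeomorphisms on a compact Hausdorff space X, and suppose there exists a unital positive G-equivariant linear map φ : ℓ∞(G) → C(X,ℝ). Then for every x ∈ X, the stabilizer subgroup G_x = {t ∈ G : t·x = x} is amenable. -/
/-- If there is a unital positive `G`-equivariant linear map `φ : ℓ∞(G) → C(X,ℝ)`, then
every stabilizer subgroup `G_x` is amenable. -/
theorem stmt_8 {G X : Type*} [Group G] [TopologicalSpace G] [DiscreteTopology G]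
    [TopologicalSpace X] [CompactSpace X] [T2Space X]
    [MulAction G X] [ContinuousConstSMul G X]
    (φ : BoundedContinuousFunction G ℝ →ₗ[ℝ] C(X, ℝ))
    (hφ1 : φ 1 = 1)
    (hφpos : ∀ h : BoundedContinuousFunction G ℝ, (∀ t, 0 ≤ h t) → ∀ x : X, 0 ≤ φ h x)
    (hφeq : ∀ (s : G) (h : BoundedContinuousFunction G ℝ) (x : X),
      φ (h.compContinuous ⟨fun t => s⁻¹ * t, continuous_of_discreteTopology⟩) x
        = φ h (s⁻¹ • x)) :
    ∀ x : X, HasLeftInvariantMean (MulAction.stabilizer G x) := by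
  classical
  intro x
  set H := MulAction.stabilizer G x with hH
  -- section: for each point in the orbit, choose a group element mapping x to it
  let σ : X → G := fun y => if h : ∃ g' : G, g'⁻¹ • x = y then h.choose else 1
  have hσ : ∀ g : G, (σ (g⁻¹ • x))⁻¹ • x = g⁻¹ • x := by
    intro g
    have h : ∃ g' : G, g'⁻¹ • x = g⁻¹ • x := ⟨g, rfl⟩
    simp only [σ, dif_pos h]
    exact h.choose_spec
  let c : G → G := fun g => σ (g⁻¹ • x)
  have hmem : ∀ g : G, g * (c g)⁻¹ ∈ H := by
    intro g
    rw [MulAction.mem_stabilizer_iff, mul_smul]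
    rw [hσ g, smul_inv_smul]
  have hc : ∀ (r : H) (g : G), c ((r : G)⁻¹ * g) = c g := by
    intro r g
    have : ((r : G)⁻¹ * g)⁻¹ • x = g⁻¹ • x := by
      rw [mul_inv_rev, inv_inv, mul_smul]
      congr 1
      exact r.2
    simp only [c, this]
  -- the extension map
  let E : BoundedContinuousFunction H ℝ → BoundedContinuousFunction G ℝ := fun f =>
    ⟨⟨fun g => f ⟨g * (c g)⁻¹, hmem g⟩, continuous_of_discreteTopology⟩,
      f.map_bounded'.choose, fun a b => f.map_bounded'.choose_spec _ _⟩
  have hEapp : ∀ (f : BoundedContinuousFunction H ℝ) (g : G),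
      E f g = f ⟨g * (c g)⁻¹, hmem g⟩ := fun _ _ => rfl
  refine ⟨{ toFun := fun f => φ (E f) x,
            map_add' := ?_, map_smul' := ?_ }, ?_, ?_, ?_⟩
  · intro f g
    have : E (f + g) = E f + E g := by
      ext t; simp [hEapp]
    simp only [this, map_add]
    rfl
  · intro a f
    have : E (a • f) = a • E f := by
      ext t; simp [hEapp]
    simp only [this, map_smul]
    rfl
  · have h1 : E 1 = 1 := by
      ext t; rfl
    show φ (E 1) x = 1
    rw [h1, hφ1]
    rfl
  · intro f hf
    exact hφpos _ (fun t => hf _) x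
  · intro r f
    have key : E (f.compContinuous ⟨fun t => r⁻¹ * t, continuous_of_discreteTopology⟩)
        = (E f).compContinuous ⟨fun t => (r : G)⁻¹ * t, continuous_of_discreteTopology⟩ := by
      ext g
      simp only [BoundedContinuousFunction.compContinuous_apply, ContinuousMap.coe_mk, hEapp]
      congr 1
      apply Subtype.ext
      simp only [Submonoid.coe_mul, Subgroup.coe_mul, InvMemClass.coe_inv, hc r g]
      group
    have hx : (r : G)⁻¹ • x = x := by
      have := r.2
      rw [MulAction.mem_stabilizer_iff] at this
      rw [inv_smul_eq_iff, this]
    show φ (E (f.compContinuous _)) x = φ (E f) x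
    rw [key, hφeq ((r : G)) (E f) x, hx]
end

section
/- Let p be a prime and let G be an infinite group in which every subgroup other than the trivial subgroup and G itself is cyclic of order p. Suppose G acts by homeomorphisms on a compact Hausdorff space X, the action is minimal (every orbit is dense), and X has no isolated points. Then the action is topologically free: for every s ∈ G with s ≠ e, the set {x ∈ X : s·x ≠ x} is dense in X. -/
/-!
Suppose some `s ≠ 1` fixes a nonempty open set `U` pointwise. Proper nontrivial subgroups of `G`
all have the same finite order, so they are maximal; they are also self-normalizing, because `G`
is a torsion group and hence simple (a proper nontrivial normal subgroup `N` would give a finite,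
hence proper, subgroup `N ⊔ ⟨g⟩` strictly larger than `N`). Stabilizers are proper (a global fixed point would be dense, hence isolated), so every point
of `U` has stabilizer exactly `⟨s⟩`. If `x` and `g • x` both lie in `U`, then `g` conjugates
`⟨s⟩ = Stab x` to `⟨s⟩ = Stab (g • x)`, so `g ∈ N(⟨s⟩) = ⟨s⟩` fixes `x`. Hence the dense orbit of
`x` meets `U` only in `x`, and `x` is isolated.
-/

open Subgroup MulAction

section TarskiMonster

variable {G : Type*} [Group G] {p : ℕ}

theorem Subgroup.eq_of_le_of_forall_card_subgroup_eq
    (hG : ∀ H : Subgroup G, H ≠ ⊥ → H ≠ ⊤ → Nat.card H = p) (hp : p ≠ 0)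
    {H K : Subgroup G} (hH : H ≠ ⊥) (hK : K ≠ ⊤) (hle : H ≤ K) : H = K := by
  have hK₀ : K ≠ ⊥ := ne_bot_of_le_ne_bot hH hle
  have hKp := hG K hK₀ hK
  have : Finite K := Nat.finite_of_card_ne_zero (hKp ▸ hp)
  exact eq_of_le_of_card_ge hle (by rw [hKp, hG H hH (ne_top_of_le_ne_top hK hle)])

theorem isMulTorsion_of_forall_card_subgroup_eq
    (hG : ∀ H : Subgroup G, H ≠ ⊥ → H ≠ ⊤ → Nat.card H = p) (hp : p ≠ 0) :
    IsMulTorsion G := by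
  intro g
  by_contra hg
  have hg2 : ¬IsOfFinOrder (g ^ 2) := by simpa [isOfFinOrder_pow] using hg
  by_cases htop : zpowers (g ^ 2) = ⊤
  · -- `g = (g ^ 2) ^ k` for some `k`, so `g ^ (2 * k - 1) = 1` with `2 * k - 1 ≠ 0`
    obtain ⟨k, hk⟩ := mem_zpowers_iff.mp (htop ▸ mem_top g : g ∈ zpowers (g ^ 2))
    refine hg (isOfFinOrder_iff_zpow_eq_one.mpr ⟨2 * k - 1, by omega, ?_⟩)
    rw [zpow_sub_one, zpow_mul, zpow_two, ← sq, hk, mul_inv_cancel]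
  · have hbot : zpowers (g ^ 2) ≠ ⊥ := zpowers_ne_bot.mpr fun h => hg2 (h ▸ IsOfFinOrder.one)
    have := hG _ hbot htop
    rw [Nat.card_zpowers] at this
    exact hg2 (orderOf_ne_zero_iff.mp (this ▸ hp))

theorem isSimpleGroup_of_forall_card_subgroup_eq [Infinite G]
    (hG : ∀ H : Subgroup G, H ≠ ⊥ → H ≠ ⊤ → Nat.card H = p) (hp : p ≠ 0) :
    IsSimpleGroup G := by
  refine ⟨fun N hN => or_iff_not_imp_left.mpr fun hN₀ => by_contra fun hN₁ => ?_⟩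
  obtain ⟨g, hg⟩ : ∃ g, g ∉ N := by simpa [eq_top_iff'] using hN₁
  have : Finite N := Nat.finite_of_card_ne_zero (hG N hN₀ hN₁ ▸ hp)
  have hfin : ((N ⊔ zpowers g : Subgroup G) : Set G).Finite := by
    rw [normal_mul]
    exact (Set.toFinite _).mul (isMulTorsion_of_forall_card_subgroup_eq hG hp g).finite_zpowers
  have hsup : N ⊔ zpowers g ≠ ⊤ := fun h => Set.infinite_univ (by simpa [h] using hfin)
  have heq := Subgroup.eq_of_le_of_forall_card_subgroup_eq hG hp hN₀ hsup le_sup_left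
  exact hg (heq ▸ mem_sup_right (mem_zpowers g))

theorem normalizer_eq_self_of_forall_card_subgroup_eq [Infinite G]
    (hG : ∀ H : Subgroup G, H ≠ ⊥ → H ≠ ⊤ → Nat.card H = p) (hp : p ≠ 0)
    {H : Subgroup G} (hH₀ : H ≠ ⊥) (hH₁ : H ≠ ⊤) : normalizer (H : Set G) = H := by
  have := isSimpleGroup_of_forall_card_subgroup_eq hG hp
  have hN : normalizer (H : Set G) ≠ ⊤ := fun h =>
    ((normalizer_eq_top_iff.mp h).eq_bot_or_eq_top).elim hH₀ hH₁
  exact (Subgroup.eq_of_le_of_forall_card_subgroup_eq hG hp hH₀ hN le_normalizer).symm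

end TarskiMonster

section Action

variable {G X : Type*} [Group G] [MulAction G X]

theorem MulAction.mem_normalizer_stabilizer_of_stabilizer_smul_eq {g : G} {x : X}
    (h : stabilizer G (g • x) = stabilizer G x) : g ∈ normalizer (stabilizer G x : Set G) := by
  refine mem_normalizer_iff.mpr fun k => ?_
  rw [mem_stabilizer_iff, ← h, mem_stabilizer_iff, smul_smul, inv_mul_cancel_right, mul_smul,
    smul_left_cancel_iff]

variable [TopologicalSpace X] [T1Space X]

theorem MulAction.stabilizer_ne_top_of_dense_orbit {y : X} (hdense : Dense (orbit G y))
    (hy : ¬IsOpen ({y} : Set X)) : stabilizer G y ≠ ⊤ := by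
  intro htop
  have horbit : orbit G y = {y} := by
    refine Set.eq_singleton_iff_unique_mem.mpr ⟨mem_orbit_self y, ?_⟩
    rintro _ ⟨g, rfl⟩
    exact (htop ▸ mem_top g : g ∈ stabilizer G y)
  rw [horbit] at hdense
  have huniv : ({y} : Set X) = Set.univ :=
    isClosed_singleton.closure_eq.symm.trans hdense.closure_eq
  exact hy (huniv ▸ isOpen_univ)

theorem MulAction.isOpen_singleton_of_dense_orbit {x : X} (hdense : Dense (orbit G x))
    {U : Set X} (hU : IsOpen U) (hx : x ∈ U) (h : ∀ g : G, g • x ∈ U → g • x = x) :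
    IsOpen ({x} : Set X) := by
  suffices U = {x} from this ▸ hU
  refine Set.eq_singleton_iff_unique_mem.mpr ⟨hx, fun u hu => by_contra fun hux => ?_⟩
  obtain ⟨_, ⟨hgU, hgx⟩, g, rfl⟩ :=
    hdense.inter_open_nonempty (U \ {x}) (hU.sdiff isClosed_singleton) ⟨u, hu, hux⟩
  exact hgx (h g hgU)

end Action

theorem stmt_10_general {G X : Type*} [Group G] [Infinite G]
    [TopologicalSpace X] [T2Space X]
    [MulAction G X]
    (p : ℕ) (hp : p.Prime)
    (htarski : ∀ H : Subgroup G, H ≠ ⊥ → H ≠ ⊤ → IsCyclic H ∧ Nat.card H = p)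
    (hmin : ∀ y : X, Dense (Set.range fun s : G => s • y))
    (hniso : ∀ x : X, ¬ IsOpen ({x} : Set X)) :
    ∀ s : G, s ≠ 1 → Dense {x : X | s • x ≠ x} := by
  have hG : ∀ H : Subgroup G, H ≠ ⊥ → H ≠ ⊤ → Nat.card H = p := fun H h₀ h₁ =>
    (htarski H h₀ h₁).2
  have hstab_ne_top (y : X) : stabilizer G y ≠ ⊤ :=
    stabilizer_ne_top_of_dense_orbit (hmin y) (hniso y)
  intro s hs
  rw [dense_iff_inter_open]
  by_contra! ⟨U, hU, ⟨x, hx⟩, hfix⟩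
  have hstab : ∀ y ∈ U, stabilizer G y = zpowers s := fun y hy =>
    (Subgroup.eq_of_le_of_forall_card_subgroup_eq hG hp.ne_zero (zpowers_ne_bot.mpr hs)
      (hstab_ne_top y) (zpowers_le.mpr (by_contra fun h => hfix.subset ⟨hy, h⟩))).symm
  refine hniso x (isOpen_singleton_of_dense_orbit (hmin x) hU hx fun g hgx => ?_)
  have hg : g ∈ normalizer (stabilizer G x : Set G) :=
    mem_normalizer_stabilizer_of_stabilizer_smul_eq (by rw [hstab _ hgx, hstab x hx])
  rwa [normalizer_eq_self_of_forall_card_subgroup_eq hG hp.ne_zero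
    (hstab x hx ▸ zpowers_ne_bot.mpr hs) (hstab_ne_top x)] at hg

/-- A Tarski monster group of prime order `p` (an infinite group all of whose proper
nontrivial subgroups are cyclic of order `p`) acting minimally on a compact Hausdorff space
with no isolated points acts topologically freely. -/
theorem stmt_10 {G X : Type*} [Group G] [Infinite G]
    [TopologicalSpace X] [CompactSpace X] [T2Space X] [Nonempty X]
    [MulAction G X] [ContinuousConstSMul G X]
    (p : ℕ) (hp : p.Prime)
    (htarski : ∀ H : Subgroup G, H ≠ ⊥ → H ≠ ⊤ → IsCyclic H ∧ Nat.card H = p)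
    (hmin : ∀ y : X, Dense (Set.range fun s : G => s • y))
    (hniso : ∀ x : X, ¬ IsOpen ({x} : Set X)) :
    ∀ s : G, s ≠ 1 → Dense {x : X | s • x ≠ x} :=
  stmt_10_general p hp htarski hmin hniso
end

section
/- Let p be a prime and let G be an infinite group in which every subgroup other than the trivial subgroup and G itself is cyclic of order p. Suppose G acts by homeomorphisms on a compact Hausdorff space X with more than one point, and the action is minimal (every orbit is dense). Then for every s ∈ G with s ≠ e, the interior of the fixed-point set {x ∈ X : s·x = x} is a finite set. -/
/-!
Every nontrivial element generates a maximal subgroup of order `p`, and this subgroup is its own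
normalizer. A minimal action on a nontrivial T1 space has no global fixed point, so every point
fixed by `s ≠ 1` has stabilizer exactly `⟨s⟩`. If the interior `U` of the fixed-point set of `s`
contained a point `x`, then any `g` with `g • x ∈ U` would conjugate `⟨s⟩ = Stab x` onto
`⟨s⟩ = Stab (g • x)`, hence lie in the normalizer `⟨s⟩`. So `x` returns to `U` only finitely often,
whereas compactness and minimality cover `G` by finitely many translates of the return set,
making `G` finite.
-/

open Subgroup MulAction Pointwise

namespace Subgroup

variable {G : Type*} [Group G] {p : ℕ}

lemma notMem_zpowers_sq {a : G} (ha : ¬IsOfFinOrder a) : a ∉ zpowers (a ^ 2) := by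
  rintro ⟨k, hk⟩
  have h : a ^ (2 * k) = a ^ (1 : ℤ) := by simpa [zpow_mul] using hk
  have := injective_zpow_iff_not_isOfFinOrder.mpr ha h
  omega

lemma zpowers_ne_top_of_card_eq [Infinite G] (hp : p ≠ 0)
    (hcard : ∀ H : Subgroup G, H ≠ ⊥ → H ≠ ⊤ → Nat.card H = p) (a : G) : zpowers a ≠ ⊤ := by
  intro htop
  have ha : ¬IsOfFinOrder a := by
    rw [← orderOf_eq_zero_iff, ← Nat.card_zpowers, htop, card_top, Nat.card_eq_zero_of_infinite]
  have ha2 : ¬IsOfFinOrder (a ^ 2) := fun h => ha (h.of_pow two_ne_zero)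
  have hbot : zpowers (a ^ 2) ≠ ⊥ :=
    zpowers_ne_bot.mpr fun h => ha2 (h ▸ IsOfFinOrder.one)
  have htop2 : zpowers (a ^ 2) ≠ ⊤ := fun h => notMem_zpowers_sq ha (h ▸ mem_top a)
  apply hp
  rw [← hcard _ hbot htop2, Nat.card_zpowers, orderOf_eq_zero_iff.mpr ha2]

lemma card_zpowers_eq_of_ne_one [Infinite G] (hp : p ≠ 0)
    (hcard : ∀ H : Subgroup G, H ≠ ⊥ → H ≠ ⊤ → Nat.card H = p) {a : G} (ha : a ≠ 1) :
    Nat.card (zpowers a) = p :=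
  hcard _ (zpowers_ne_bot.mpr ha) (zpowers_ne_top_of_card_eq hp hcard a)

lemma finite_zpowers_of_ne_one [Infinite G] (hp : p ≠ 0)
    (hcard : ∀ H : Subgroup G, H ≠ ⊥ → H ≠ ⊤ → Nat.card H = p) {a : G} (ha : a ≠ 1) :
    (zpowers a : Set G).Finite :=
  Set.finite_coe_iff.mp (Nat.finite_of_card_ne_zero (card_zpowers_eq_of_ne_one hp hcard ha ▸ hp))

lemma eq_zpowers_of_zpowers_le [Infinite G] (hp : p ≠ 0)
    (hcard : ∀ H : Subgroup G, H ≠ ⊥ → H ≠ ⊤ → Nat.card H = p) {a : G} (ha : a ≠ 1)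
    {H : Subgroup G} (hle : zpowers a ≤ H) (htop : H ≠ ⊤) : H = zpowers a := by
  have hbot : H ≠ ⊥ := fun h => zpowers_ne_bot.mpr ha (le_bot_iff.mp (h ▸ hle))
  have hH : Nat.card H = p := hcard H hbot htop
  have : Finite H := Nat.finite_of_card_ne_zero (hH ▸ hp)
  exact (eq_of_le_of_card_ge hle (by rw [hH, card_zpowers_eq_of_ne_one hp hcard ha])).symm

lemma sup_zpowers_eq_top [Infinite G] (hp : p ≠ 0)
    (hcard : ∀ H : Subgroup G, H ≠ ⊥ → H ≠ ⊤ → Nat.card H = p) {a b : G} (ha : a ≠ 1)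
    (hb : b ∉ zpowers a) : zpowers a ⊔ zpowers b = ⊤ := by
  by_contra htop
  apply hb
  rw [← eq_zpowers_of_zpowers_le hp hcard ha le_sup_left htop]
  exact mem_sup_right (mem_zpowers b)

lemma normalizer_zpowers_eq [Infinite G] (hp : p ≠ 0)
    (hcard : ∀ H : Subgroup G, H ≠ ⊥ → H ≠ ⊤ → Nat.card H = p) {a : G} (ha : a ≠ 1) :
    normalizer (zpowers a : Set G) = zpowers a := by
  refine eq_zpowers_of_zpowers_le hp hcard ha le_normalizer fun htop => ?_
  have : (zpowers a).Normal := normalizer_eq_top_iff.mp htop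
  have hfin := finite_zpowers_of_ne_one hp hcard ha
  obtain ⟨b, hb⟩ := hfin.infinite_compl.nonempty
  -- `⟨a⟩` normal would make `G = ⟨a⟩ ⟨b⟩` finite.
  have hfinG : (Set.univ : Set G).Finite := by
    rw [← coe_top, ← sup_zpowers_eq_top hp hcard ha hb, normal_mul]
    exact hfin.mul (finite_zpowers_of_ne_one hp hcard fun h => hb (h ▸ one_mem _))
  exact Set.infinite_univ hfinG

end Subgroup

namespace MulAction

variable {G X : Type*} [Group G] [MulAction G X]

lemma mem_normalizer_of_stabilizer_eq {H : Subgroup G} {x : X} {g : G}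
    (hx : stabilizer G x = H) (hgx : stabilizer G (g • x) = H) : g ∈ normalizer (H : Set G) := by
  refine mem_normalizer_iff.mpr fun h => Iff.symm ?_
  conv_lhs => rw [← hgx, stabilizer_smul_eq_stabilizer_map_conj, mem_map_equiv, hx]
  simp [mul_assoc]

variable [TopologicalSpace X]

lemma stabilizer_ne_top_of_isMinimal [T1Space X] [Nontrivial X] [IsMinimal G X] (x : X) :
    stabilizer G x ≠ ⊤ := by
  intro htop
  have hinv : ∀ g : G, g • ({x} : Set X) ⊆ {x} := fun g => by
    rw [Set.smul_set_singleton, Set.singleton_subset_iff]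
    exact (htop ▸ mem_top g : g ∈ stabilizer G x)
  have huniv : ({x} : Set X) = Set.univ :=
    (eq_empty_or_univ_of_smul_invariant_closed G isClosed_singleton hinv).resolve_left
      (Set.singleton_ne_empty x)
  obtain ⟨y, hy⟩ := exists_ne x
  exact hy (huniv.symm ▸ Set.mem_univ y : y ∈ ({x} : Set X))

lemma finite_of_finite_setOf_smul_mem [CompactSpace X] [ContinuousConstSMul G X] [IsMinimal G X]
    {U : Set X} (hU : IsOpen U) (hne : U.Nonempty) (x : X)
    (hfin : {g : G | g • x ∈ U}.Finite) : Finite G := by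
  obtain ⟨I, hI⟩ := isCompact_univ.exists_finite_cover_smul G hU hne
  have hcover : (Set.univ : Set G) ⊆ ⋃ g ∈ I, g • {g : G | g • x ∈ U} := by
    intro h _
    obtain ⟨g, hgI, hg⟩ := Set.mem_iUnion₂.mp (hI (Set.mem_univ (h • x)))
    refine Set.mem_biUnion hgI (Set.mem_smul_set_iff_inv_smul_mem.mpr ?_)
    simpa [mul_smul] using Set.mem_smul_set_iff_inv_smul_mem.mp hg
  exact Set.finite_univ_iff.mp
    ((I.finite_toSet.biUnion fun (g : G) _ => hfin.smul_set (a := g)).subset hcover)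

end MulAction

/-- If a Tarski monster group of prime order `p` acts minimally on a compact Hausdorff
space `X` with more than one point, then for every non-identity `s` the interior of the
fixed-point set of `s` is finite. -/
theorem stmt_12 {G X : Type*} [Group G] [Infinite G]
    [TopologicalSpace X] [CompactSpace X] [T2Space X] [Nontrivial X]
    [MulAction G X] [ContinuousConstSMul G X]
    (p : ℕ) (hp : p.Prime)
    (htarski : ∀ H : Subgroup G, H ≠ ⊥ → H ≠ ⊤ → IsCyclic H ∧ Nat.card H = p)
    (hmin : ∀ y : X, Dense (Set.range fun t : G => t • y)) :
    ∀ s : G, s ≠ 1 → (interior {x : X | s • x = x}).Finite := by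
  have hcard : ∀ H : Subgroup G, H ≠ ⊥ → H ≠ ⊤ → Nat.card H = p := fun H h₁ h₂ =>
    (htarski H h₁ h₂).2
  have : IsMinimal G X := ⟨hmin⟩
  intro s hs
  set U := interior {x : X | s • x = x}
  suffices U = ∅ from this ▸ Set.finite_empty
  by_contra! hU
  obtain ⟨x, hx⟩ := hU
  have hstab : ∀ y ∈ U, stabilizer G y = zpowers s := fun y hy =>
    eq_zpowers_of_zpowers_le hp.ne_zero hcard hs
      (zpowers_le.mpr (interior_subset (s := {x : X | s • x = x}) hy))
      (stabilizer_ne_top_of_isMinimal y)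
  have hreturn : {g : G | g • x ∈ U} ⊆ zpowers s := fun g hg =>
    normalizer_zpowers_eq hp.ne_zero hcard hs ▸
      mem_normalizer_of_stabilizer_eq (hstab x hx) (hstab _ hg)
  have : Finite G := finite_of_finite_setOf_smul_mem isOpen_interior ⟨x, hx⟩ x
    ((finite_zpowers_of_ne_one hp.ne_zero hcard hs).subset hreturn)
  exact not_finite G
end
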